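/- arXiv:2104.15138 — 2 statements merged into one kernel-verified Lean document; each statement's English description precedes it below -/
import Mathlib

section
/- Let A(θ) be as in the differentiability lemma (C¹, column-stochastic, strictly positive entries on open Θ ⊆ ℝᵐ), let ρ(θ) be the unique stationary distribution, and let φ ∈ ℝⁿ be fixed. If λ solves (A(θ)ᵀ − I)λ = −φ + (φ·ρ(θ)) 𝟏, then ∂_{θ_k}(φ · ρ(θ)) = λ · (∂_{θ_k} A(θ)) ρ(θ) for each k. -/
/-!
Adding the rank-one matrix `𝟏𝟏ᵀ` to `1 - A(θ)` gives a matrix sending `ρ(θ)` to `𝟏`. It is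
invertible because a positive column-stochastic matrix fixes no nonzero vector of zero sum: for such
a vector the triangle inequality `|(A x)ᵢ| ≤ (A |x|)ᵢ` is strict in every row, and summing over the
rows contradicts the preservation of sums. Cramer's rule then makes `ρ` differentiable.
Differentiating `A ρ = ρ` and `∑ ρ = 1` gives `ρ' = A' ρ + A ρ'` and `∑ ρ' = 0`, so
`λ ⬝ (A' ρ) = ((1 - A)ᵀ λ) ⬝ ρ' = (φ - (φ ⬝ ρ) 𝟏) ⬝ ρ' = φ ⬝ ρ'`.
-/

open Matrix Finset Topology Filter

attribute [local instance] Matrix.normedAddCommGroup Matrix.normedSpace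

theorem Finset.abs_sum_lt_sum_abs {ι α : Type*} [AddCommGroup α] [LinearOrder α]
    [IsOrderedAddMonoid α] {s : Finset ι} {f : ι → α} {p q : ι} (hp : p ∈ s) (hq : q ∈ s)
    (hfp : 0 < f p) (hfq : f q < 0) : |∑ i ∈ s, f i| < ∑ i ∈ s, |f i| := by
  rw [abs_lt, ← sum_neg_distrib]
  constructor
  · refine sum_lt_sum (fun i _ => neg_abs_le (f i)) ⟨p, hp, ?_⟩
    rw [abs_of_pos hfp]
    exact (neg_lt_zero.2 hfp).trans hfp
  · refine sum_lt_sum (fun i _ => le_abs_self (f i)) ⟨q, hq, ?_⟩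
    rw [abs_of_neg hfq]
    exact hfq.trans (neg_pos.2 hfq)

theorem exists_pos_and_exists_neg_of_sum_eq_zero {ι α : Type*} [Fintype ι] [AddCommMonoid α]
    [LinearOrder α] [IsOrderedAddMonoid α] {x : ι → α} (hsum : ∑ i, x i = 0) (hx : x ≠ 0) :
    (∃ p, 0 < x p) ∧ ∃ q, x q < 0 := by
  constructor
  · by_contra! h
    exact hx (funext fun i => (sum_eq_zero_iff_of_nonpos fun j _ => h j).1 hsum i (mem_univ i))
  · by_contra! h
    exact hx (funext fun i => (sum_eq_zero_iff_of_nonneg fun j _ => h j).1 hsum i (mem_univ i))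

namespace Matrix

variable {ι : Type*} [Fintype ι] [DecidableEq ι]

theorem eq_zero_of_mulVec_eq_self_of_sum_eq_zero {A : Matrix ι ι ℝ}
    (hA : A ∈ colStochastic ℝ ι) (hpos : ∀ i j, 0 < A i j) {x : ι → ℝ} (hfix : A *ᵥ x = x)
    (hsum : ∑ i, x i = 0) : x = 0 := by
  by_contra hx
  obtain ⟨⟨p, hp⟩, ⟨q, hq⟩⟩ := exists_pos_and_exists_neg_of_sum_eq_zero hsum hx
  have hstrict : ∀ i, |x i| < (A *ᵥ |x|) i := fun i =>
    calc |x i| = |(A *ᵥ x) i| := by rw [hfix]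
      _ < ∑ j, |A i j * x j| := abs_sum_lt_sum_abs (mem_univ p) (mem_univ q)
          (mul_pos (hpos i p) hp) (mul_neg_of_pos_of_neg (hpos i q) hq)
      _ = (A *ᵥ |x|) i := by simp [mulVec, dotProduct, abs_mul, abs_of_pos (hpos i _)]
  have hlt := sum_lt_sum_of_nonempty ⟨p, mem_univ p⟩ fun i _ => hstrict i
  rw [sum_mulVec_of_mem_colStochastic hA] at hlt
  exact lt_irrefl _ hlt

def stationarySystem (A : Matrix ι ι ℝ) : Matrix ι ι ℝ := 1 - A + of fun _ _ => 1

theorem stationarySystem_mulVec (A : Matrix ι ι ℝ) (x : ι → ℝ) :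
    stationarySystem A *ᵥ x = x - A *ᵥ x + (∑ i, x i) • 1 := by
  rw [stationarySystem, add_mulVec, sub_mulVec, one_mulVec]
  ext i
  simp [mulVec, dotProduct]

theorem stationarySystem_mulVec_eq_one {A : Matrix ι ι ℝ} {x : ι → ℝ} (hfix : A *ᵥ x = x)
    (hsum : ∑ i, x i = 1) : stationarySystem A *ᵥ x = 1 := by
  rw [stationarySystem_mulVec, hfix, hsum, sub_self, zero_add, one_smul]

theorem det_stationarySystem_ne_zero {A : Matrix ι ι ℝ} (hA : A ∈ colStochastic ℝ ι)
    (hpos : ∀ i j, 0 < A i j) : (stationarySystem A).det ≠ 0 := by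
  intro hdet
  obtain ⟨x, hx0, hx⟩ := exists_mulVec_eq_zero_iff.2 hdet
  rw [stationarySystem_mulVec] at hx
  have : Nonempty ι := (Function.ne_iff.1 hx0).nonempty
  have hsum : ∑ i, x i = 0 := by
    simpa [sum_add_distrib, sum_mulVec_of_mem_colStochastic hA, Fintype.card_ne_zero] using
      congrArg (fun y => ∑ i, y i) hx
  rw [hsum, zero_smul, add_zero, sub_eq_zero] at hx
  exact hx0 (eq_zero_of_mulVec_eq_self_of_sum_eq_zero hA hpos hx.symm hsum)

end Matrix

section Calculus

variable {𝕜 E m n : Type*} [NontriviallyNormedField 𝕜] [NormedAddCommGroup E] [NormedSpace 𝕜 E]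
  [Fintype n] {x : E}

theorem DifferentiableAt.matrix_elem {A : E → Matrix m n 𝕜} (hA : DifferentiableAt 𝕜 A x)
    (i : m) (j : n) : DifferentiableAt 𝕜 (fun y => A y i j) x :=
  differentiableAt_pi.1 (differentiableAt_pi.1 hA i) j

theorem DifferentiableAt.matrix_det [DecidableEq n] {A : E → Matrix n n 𝕜}
    (hA : DifferentiableAt 𝕜 A x) :
    DifferentiableAt 𝕜 (fun y => (A y).det) x := by
  simp_rw [det_apply]
  have := hA.matrix_elem
  fun_prop

theorem DifferentiableAt.matrix_updateCol [DecidableEq n] {A : E → Matrix m n 𝕜}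
    {b : E → m → 𝕜} (hA : DifferentiableAt 𝕜 A x) (hb : DifferentiableAt 𝕜 b x) (j : n) :
    DifferentiableAt 𝕜 (fun y => (A y).updateCol j (b y)) x := by
  refine differentiableAt_pi.2 fun i => differentiableAt_pi.2 fun k => ?_
  simp only [updateCol_apply]
  split_ifs
  · exact differentiableAt_pi.1 hb i
  · exact hA.matrix_elem i k

theorem DifferentiableAt.matrix_cramer [DecidableEq n] {A : E → Matrix n n 𝕜} {b : E → n → 𝕜}
    (hA : DifferentiableAt 𝕜 A x) (hb : DifferentiableAt 𝕜 b x) :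
    DifferentiableAt 𝕜 (fun y => cramer (A y) (b y)) x :=
  differentiableAt_pi.2 fun _ => (hA.matrix_updateCol hb _).matrix_det

theorem DifferentiableAt.of_mulVec_eventuallyEq [DecidableEq n] {A : E → Matrix n n 𝕜}
    {u b : E → n → 𝕜} (hA : DifferentiableAt 𝕜 A x) (hb : DifferentiableAt 𝕜 b x)
    (hdet : (A x).det ≠ 0) (hu : ∀ᶠ y in 𝓝 x, A y *ᵥ u y = b y) : DifferentiableAt 𝕜 u x := by
  have hcramer : u =ᶠ[𝓝 x] fun y => (A y).det⁻¹ • cramer (A y) (b y) := by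
    filter_upwards [hu, hA.matrix_det.continuousAt.eventually_ne hdet] with y hy hy0
    rw [← hy, cramer_eq_adjugate_mulVec, mulVec_mulVec, adjugate_mul, smul_mulVec,
      one_mulVec, inv_smul_smul₀ hy0]
  exact hcramer.differentiableAt_iff.2 ((hA.matrix_det.inv hdet).smul (hA.matrix_cramer hb))

variable [CompleteSpace 𝕜] [Fintype m]

theorem fderiv_mulVec_apply {A : E → Matrix m n 𝕜} {u : E → n → 𝕜}
    (hA : DifferentiableAt 𝕜 A x) (hu : DifferentiableAt 𝕜 u x) (h : E) :
    fderiv 𝕜 (fun y => A y *ᵥ u y) x h = fderiv 𝕜 A x h *ᵥ u x + A x *ᵥ fderiv 𝕜 u x h := by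
  have hd : HasFDerivAt (fun y => A y *ᵥ u y) _ x :=
    (mulVecBilin 𝕜 𝕜 : Matrix m n 𝕜 →ₗ[𝕜] _).toContinuousBilinearMap.hasFDerivAt_of_bilinear
      hA.hasFDerivAt hu.hasFDerivAt
  rw [hd.fderiv, add_comm]
  rfl

theorem fderiv_const_dotProduct_apply (c : n → 𝕜) {u : E → n → 𝕜}
    (hu : DifferentiableAt 𝕜 u x) (h : E) :
    fderiv 𝕜 (fun y => c ⬝ᵥ u y) x h = c ⬝ᵥ fderiv 𝕜 u x h := by
  have hd : HasFDerivAt (fun y => c ⬝ᵥ u y) _ x :=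
    (dotProductBilin 𝕜 𝕜 : (n → 𝕜) →ₗ[𝕜] _).toContinuousBilinearMap.hasFDerivAt_of_bilinear
      (hasFDerivAt_const c x) hu.hasFDerivAt
  rw [hd.fderiv]
  simp

end Calculus

theorem Matrix.dotProduct_eq_dotProduct_mulVec_of_adjoint {R ι : Type*} [CommRing R] [Fintype ι]
    [DecidableEq ι] {A A' : Matrix ι ι R} {ρ ρ' φ lam : ι → R} {c : R}
    (hlam : (Aᵀ - 1) *ᵥ lam = -φ + c • 1) (hρ' : ρ' = A' *ᵥ ρ + A *ᵥ ρ')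
    (hsum : ∑ i, ρ' i = 0) : φ ⬝ᵥ ρ' = lam ⬝ᵥ (A' *ᵥ ρ) := by
  have hA' : A' *ᵥ ρ = (1 - A) *ᵥ ρ' := by
    rw [sub_mulVec, one_mulVec, eq_sub_iff_add_eq, ← hρ']
  have hlam' : (1 - A)ᵀ *ᵥ lam = φ - c • 1 := by
    rw [← neg_sub, transpose_neg, neg_mulVec, transpose_sub, transpose_one, hlam]
    abel
  rw [hA', dotProduct_mulVec, ← mulVec_transpose, hlam', sub_dotProduct, smul_dotProduct,
    one_dotProduct, hsum, smul_zero, sub_zero]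

theorem stmt5_general (n m : ℕ)
    (Θ : Set (Fin m → ℝ)) (hΘ : IsOpen Θ)
    (A : (Fin m → ℝ) → Matrix (Fin n) (Fin n) ℝ)
    (hA : ContDiffOn ℝ 1 A Θ)
    (hpos : ∀ θ ∈ Θ, ∀ i j, 0 < A θ i j)
    (hcol : ∀ θ ∈ Θ, ∀ j, ∑ i, A θ i j = 1)
    (ρ : (Fin m → ℝ) → (Fin n → ℝ))
    (hρ : ∀ θ ∈ Θ, (A θ).mulVec (ρ θ) = ρ θ ∧ ∑ i, ρ θ i = 1)
    (θ₀ : Fin m → ℝ) (hθ₀ : θ₀ ∈ Θ)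
    (φ : Fin n → ℝ) (lam : Fin n → ℝ)
    (hlam : ((A θ₀)ᵀ - 1).mulVec lam = -φ + (φ ⬝ᵥ ρ θ₀) • (fun _ => (1 : ℝ))) :
    ∀ k : Fin m,
      fderivWithin ℝ (fun θ => φ ⬝ᵥ ρ θ) Θ θ₀ (Pi.single k 1) =
        lam ⬝ᵥ ((fderivWithin ℝ A Θ θ₀ (Pi.single k 1)).mulVec (ρ θ₀)) := by
  intro k
  have hΘ₀ : Θ ∈ 𝓝 θ₀ := hΘ.mem_nhds hθ₀
  have hρΘ : ∀ᶠ θ in 𝓝 θ₀, A θ *ᵥ ρ θ = ρ θ ∧ ∑ i, ρ θ i = 1 :=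
    eventually_of_mem hΘ₀ hρ
  have hA₀ : DifferentiableAt ℝ A θ₀ := (hA.differentiableOn one_ne_zero).differentiableAt hΘ₀
  have hstoch : A θ₀ ∈ colStochastic ℝ (Fin n) :=
    mem_colStochastic_iff_sum.2 ⟨fun i j => (hpos θ₀ hθ₀ i j).le, hcol θ₀ hθ₀⟩
  have hρ₀ : DifferentiableAt ℝ ρ θ₀ := by
    refine DifferentiableAt.of_mulVec_eventuallyEq (A := fun θ => stationarySystem (A θ))
      (by unfold stationarySystem; fun_prop) (differentiableAt_const 1)
      (det_stationarySystem_ne_zero hstoch (hpos θ₀ hθ₀)) ?_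
    filter_upwards [hρΘ] with θ hθ using stationarySystem_mulVec_eq_one hθ.1 hθ.2
  rw [fderivWithin_of_isOpen hΘ hθ₀, fderivWithin_of_isOpen hΘ hθ₀,
    fderiv_const_dotProduct_apply φ hρ₀]
  refine dotProduct_eq_dotProduct_mulVec_of_adjoint hlam ?_ ?_
  · have hfix : (fun θ => A θ *ᵥ ρ θ) =ᶠ[𝓝 θ₀] ρ := hρΘ.mono fun θ hθ => hθ.1
    rw [← fderiv_mulVec_apply hA₀ hρ₀, hfix.fderiv_eq]
  · have hone : (fun θ => 1 ⬝ᵥ ρ θ) =ᶠ[𝓝 θ₀] fun _ => 1 :=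
      hρΘ.mono fun θ hθ => (one_dotProduct _).trans hθ.2
    rw [← one_dotProduct, ← fderiv_const_dotProduct_apply 1 hρ₀, hone.fderiv_eq]
    simp

/-- In the setting of the differentiability lemma (`A(θ)` is `C¹`,
column-stochastic with strictly positive entries on an open set `Θ ⊆ ℝᵐ`), let `ρ(θ)`
be the unique stationary distribution and fix `φ ∈ ℝⁿ`.  If `λ` solves the adjoint
system `(A(θ₀)ᵀ − I)λ = −φ + (φ·ρ(θ₀)) 𝟏`, then
`∂_{θ_k}(φ · ρ(θ)) = λ · (∂_{θ_k} A(θ₀)) ρ(θ₀)` for each `k`. -/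
theorem stmt5 (n m : ℕ) (hn : 0 < n)
    (Θ : Set (Fin m → ℝ)) (hΘ : IsOpen Θ)
    (A : (Fin m → ℝ) → Matrix (Fin n) (Fin n) ℝ)
    (hA : ContDiffOn ℝ 1 A Θ)
    (hpos : ∀ θ ∈ Θ, ∀ i j, 0 < A θ i j)
    (hcol : ∀ θ ∈ Θ, ∀ j, ∑ i, A θ i j = 1)
    (ρ : (Fin m → ℝ) → (Fin n → ℝ))
    (hρ : ∀ θ ∈ Θ, (A θ).mulVec (ρ θ) = ρ θ ∧ ∑ i, ρ θ i = 1)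
    (θ₀ : Fin m → ℝ) (hθ₀ : θ₀ ∈ Θ)
    (φ : Fin n → ℝ) (lam : Fin n → ℝ)
    (hlam : ((A θ₀)ᵀ - 1).mulVec lam = -φ + (φ ⬝ᵥ ρ θ₀) • (fun _ => (1 : ℝ))) :
    ∀ k : Fin m,
      fderivWithin ℝ (fun θ => φ ⬝ᵥ ρ θ) Θ θ₀ (Pi.single k 1) =
        lam ⬝ᵥ ((fderivWithin ℝ A Θ θ₀ (Pi.single k 1)).mulVec (ρ θ₀)) :=
  stmt5_general n m Θ hΘ A hA hpos hcol ρ hρ θ₀ hθ₀ φ lam hlam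
end

section
/- Let Ω = [0,4], p > 1, ρ(x,θ) = (0.5+θ)χ_{[0,1]}(x) + (0.5−θ)χ_{[2,3]}(x) and ρ*(y) = 0.5 χ_{[1,2]}(y) + 0.5 χ_{[3,4]}(y). Then the function g(θ) = W_p^p(ρ(·,θ), ρ*) is not differentiable at θ = 0: liminf_{θ→0+} (g(θ)−g(0))/θ ≥ 2^p + p − 1 while limsup_{θ→0−} (g(θ)−g(0))/θ ≤ p + 1, and 2^p + p − 1 > p + 1 for p > 1. -/
/-!
Upper bounds for `g` come from explicit translation plans: for `θ ≥ 0` the excess mass `θ` on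
`[0,1]` travels to `[3,4]`, giving `g θ ≤ 1 + (3 ^ p - 1) θ`, while for `θ ≤ 0` the deficit on
`[0,1]` is filled by moving mass `-θ` from `[2,3]` back to `[1,2]`, giving `g θ ≤ 1`.
Lower bounds come from weak Kantorovich duality with a one-parameter family of potentials
`φ_δ x + ψ_δ y ≤ |x - y| ^ p`, `1 - p ≤ δ ≤ 2 ^ p - p - 1`, whose dual value is
`1 + (2p + δ) θ`. Hence `g 0 = 1`, and the two ends of the range of `δ` give the one-sided
slope bounds `2 ^ p + p - 1` on the right and `p + 1` on the left.
-/

open MeasureTheory Set Filter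

/-- The Kantorovich optimal transport cost between two measures. -/
noncomputable def Tc {X : Type*} [MeasurableSpace X] (c : X × X → ℝ)
    (μ ν : Measure X) : ℝ :=
  sInf {r : ℝ | ∃ π : Measure (X × X),
    π.map Prod.fst = μ ∧ π.map Prod.snd = ν ∧ r = ∫ z, c z ∂π}

/-- The density `ρ(x,θ) = (0.5+θ)·χ_{[0,1]}(x) + (0.5−θ)·χ_{[2,3]}(x)`. -/
noncomputable def rhoDens (θ : ℝ) : ℝ → ℝ :=
  fun x => (0.5 + θ) * Set.indicator (Icc (0 : ℝ) 1) (fun _ => (1 : ℝ)) x +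
    (0.5 - θ) * Set.indicator (Icc (2 : ℝ) 3) (fun _ => (1 : ℝ)) x

/-- The reference density `ρ*(y) = 0.5·χ_{[1,2]}(y) + 0.5·χ_{[3,4]}(y)`. -/
noncomputable def rhoStarDens : ℝ → ℝ :=
  fun y => 0.5 * Set.indicator (Icc (1 : ℝ) 2) (fun _ => (1 : ℝ)) y +
    0.5 * Set.indicator (Icc (3 : ℝ) 4) (fun _ => (1 : ℝ)) y

/-- `g(θ) = W_p^p(ρ(·,θ), ρ*)`, the `p`-th power Wasserstein cost. -/
noncomputable def gcost (p : ℝ) (θ : ℝ) : ℝ :=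
  Tc (fun z : ℝ × ℝ => |z.1 - z.2| ^ p)
    (volume.withDensity fun x => ENNReal.ofReal (rhoDens θ x))
    (volume.withDensity fun y => ENNReal.ofReal (rhoStarDens y))

open scoped Topology

section Duality

variable {X : Type*} [MeasurableSpace X] {c : X × X → ℝ} {μ ν : Measure X}

theorem Tc_le_integral (hc : ∀ z, 0 ≤ c z) {π : Measure (X × X)}
    (hπμ : π.map Prod.fst = μ) (hπν : π.map Prod.snd = ν) :
    Tc c μ ν ≤ ∫ z, c z ∂π :=
  csInf_le ⟨0, by rintro r ⟨π', -, -, rfl⟩; exact integral_nonneg hc⟩ ⟨π, hπμ, hπν, rfl⟩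

theorem integral_add_integral_le_Tc [IsProbabilityMeasure μ] [IsProbabilityMeasure ν]
    {φ ψ : X → ℝ} {s t : Set X} {C : ℝ} (hc : Measurable c)
    (hs : ∀ᵐ x ∂μ, x ∈ s) (ht : ∀ᵐ y ∂ν, y ∈ t) (hcC : ∀ x ∈ s, ∀ y ∈ t, |c (x, y)| ≤ C)
    (hφ : Integrable φ μ) (hψ : Integrable ψ ν)
    (hφψ : ∀ x ∈ s, ∀ y ∈ t, φ x + ψ y ≤ c (x, y)) :
    ∫ x, φ x ∂μ + ∫ y, ψ y ∂ν ≤ Tc c μ ν := by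
  refine le_csInf ⟨_, μ.prod ν, by simp, by simp, rfl⟩ ?_
  rintro r ⟨π, rfl, rfl, rfl⟩
  have : IsProbabilityMeasure π := by
    constructor
    simpa [Measure.map_apply measurable_fst MeasurableSet.univ] using
      measure_univ (μ := π.map Prod.fst)
  have hst : ∀ᵐ z ∂π, z.1 ∈ s ∧ z.2 ∈ t :=
    (ae_of_ae_map measurable_fst.aemeasurable hs).and
      (ae_of_ae_map measurable_snd.aemeasurable ht)
  have hφ' : Integrable (fun z => φ z.1) π := hφ.comp_measurable measurable_fst
  have hψ' : Integrable (fun z => ψ z.2) π := hψ.comp_measurable measurable_snd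
  -- without the bound `C`, `∫ z, c z ∂π` could be the junk value `0` of a non-integrable `c`
  have hcπ : Integrable c π :=
    .of_bound hc.aestronglyMeasurable C (hst.mono fun z hz => hcC _ hz.1 _ hz.2)
  calc ∫ x, φ x ∂π.map Prod.fst + ∫ y, ψ y ∂π.map Prod.snd
      = ∫ z, (φ z.1 + ψ z.2) ∂π := by
        rw [integral_add hφ' hψ', integral_map measurable_fst.aemeasurable hφ.1,
          integral_map measurable_snd.aemeasurable hψ.1]
    _ ≤ ∫ z, c z ∂π :=
        integral_mono_ae (hφ'.add hψ') hcπ (hst.mono fun z hz => hφψ _ hz.1 _ hz.2)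

end Duality

section Slopes

variable {f : ℝ → ℝ} {a b : ℝ}

theorem le_liminf_slope_right (hlow : ∀ᶠ θ in 𝓝[>] 0, f 0 + a * θ ≤ f θ)
    (hup : ∀ᶠ θ in 𝓝[>] 0, f θ ≤ f 0 + b * θ) :
    a ≤ liminf (fun θ => (f θ - f 0) / θ) (𝓝[>] 0) := by
  have hθ : ∀ᶠ θ : ℝ in 𝓝[>] 0, 0 < θ := self_mem_nhdsWithin
  refine le_liminf_of_le (isCoboundedUnder_ge_of_eventually_le _ (x := b) ?_) ?_
  · filter_upwards [hup, hθ] with θ h hθ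
    rw [div_le_iff₀ hθ]; linarith
  · filter_upwards [hlow, hθ] with θ h hθ
    rw [le_div_iff₀ hθ]; linarith

theorem limsup_slope_left_le (hlow : ∀ᶠ θ in 𝓝[<] 0, f 0 + a * θ ≤ f θ)
    (hup : ∀ᶠ θ in 𝓝[<] 0, f θ ≤ f 0 + b * θ) :
    limsup (fun θ => (f θ - f 0) / θ) (𝓝[<] 0) ≤ a := by
  have hθ : ∀ᶠ θ : ℝ in 𝓝[<] 0, θ < 0 := self_mem_nhdsWithin
  refine limsup_le_of_le (isCoboundedUnder_le_of_eventually_le _ (x := b) ?_) ?_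
  · filter_upwards [hup, hθ] with θ h hθ
    rw [le_div_iff_of_neg hθ]; linarith
  · filter_upwards [hlow, hθ] with θ h hθ
    rw [div_le_iff_of_neg hθ]; linarith

theorem DifferentiableAt.limsup_slope_left_eq_liminf_slope_right
    (hf : DifferentiableAt ℝ f 0) :
    limsup (fun θ => (f θ - f 0) / θ) (𝓝[<] 0) = liminf (fun θ => (f θ - f 0) / θ) (𝓝[>] 0) := by
  have hslope : Tendsto (fun θ => (f θ - f 0) / θ) (𝓝[≠] 0) (𝓝 (deriv f 0)) :=
    hf.hasDerivAt.tendsto_slope.congr fun θ => by rw [slope_def_field, sub_zero]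
  rw [(hslope.mono_left (nhdsLT_le_nhdsNE 0)).limsup_eq,
    (hslope.mono_left (nhdsGT_le_nhdsNE 0)).liminf_eq]

end Slopes

section StepMeasure

noncomputable def stepMeasure (c : ℝ) (I : Set ℝ) (d : ℝ) (J : Set ℝ) : Measure ℝ :=
  ENNReal.ofReal c • volume.restrict I + ENNReal.ofReal d • volume.restrict J

variable {c d : ℝ} {I J : Set ℝ}

theorem withDensity_ofReal_add_indicator (hI : MeasurableSet I) (hJ : MeasurableSet J)
    (hIJ : Disjoint I J) :
    volume.withDensity (fun x => ENNReal.ofReal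
      (c * I.indicator (fun _ => (1 : ℝ)) x + d * J.indicator (fun _ => (1 : ℝ)) x)) =
      stepMeasure c I d J := by
  have hpt : (fun x => ENNReal.ofReal
      (c * I.indicator (fun _ => (1 : ℝ)) x + d * J.indicator (fun _ => (1 : ℝ)) x)) =
      I.indicator (fun _ => ENNReal.ofReal c) + J.indicator (fun _ => ENNReal.ofReal d) := by
    ext x
    rw [Pi.add_apply]
    by_cases hxI : x ∈ I
    · simp [hxI, hIJ.notMem_of_mem_left hxI]
    · by_cases hxJ : x ∈ J <;> simp [hxI, hxJ]
  rw [hpt, withDensity_add_left (measurable_const.indicator hI), withDensity_indicator hI,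
    withDensity_indicator hJ, withDensity_const, withDensity_const, stepMeasure]

theorem ae_mem_union_stepMeasure (hI : MeasurableSet I) (hJ : MeasurableSet J) :
    ∀ᵐ x ∂stepMeasure c I d J, x ∈ I ∪ J :=
  ae_add_measure_iff.2
    ⟨Measure.ae_smul_measure ((ae_restrict_mem hI).mono fun _ => Or.inl) _,
      Measure.ae_smul_measure ((ae_restrict_mem hJ).mono fun _ => Or.inr) _⟩

theorem isProbabilityMeasure_stepMeasure (hc : 0 ≤ c) (hd : 0 ≤ d) (hcd : c + d = 1)
    (hI : volume I = 1) (hJ : volume J = 1) : IsProbabilityMeasure (stepMeasure c I d J) := by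
  constructor
  simp [stepMeasure, hI, hJ, ← ENNReal.ofReal_add hc hd, hcd]

variable {f : ℝ → ℝ}

theorem integrable_stepMeasure (hfI : IntegrableOn f I) (hfJ : IntegrableOn f J) :
    Integrable f (stepMeasure c I d J) :=
  (hfI.smul_measure ENNReal.ofReal_ne_top).add_measure (hfJ.smul_measure ENNReal.ofReal_ne_top)

theorem integral_stepMeasure (hc : 0 ≤ c) (hd : 0 ≤ d) (hfI : IntegrableOn f I)
    (hfJ : IntegrableOn f J) :
    ∫ x, f x ∂stepMeasure c I d J = c * (∫ x in I, f x) + d * ∫ x in J, f x := by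
  rw [stepMeasure, integral_add_measure (hfI.smul_measure ENNReal.ofReal_ne_top)
      (hfJ.smul_measure ENNReal.ofReal_ne_top), integral_smul_measure, integral_smul_measure,
    ENNReal.toReal_ofReal hc, ENNReal.toReal_ofReal hd, smul_eq_mul, smul_eq_mul]

end StepMeasure

theorem map_restrict_Icc_add_const (a b k : ℝ) :
    (volume.restrict (Icc a b)).map (· + k) = volume.restrict (Icc (a + k) (b + k)) := by
  conv_rhs => rw [← map_add_right_eq_self volume k]
  rw [(measurableEmbedding_addRight k).restrict_map]
  simp

theorem integrableOn_Icc_of_eqOn_affine {f : ℝ → ℝ} {m q a b : ℝ}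
    (hf : EqOn f (fun x => m * x + q) (Icc a b)) : IntegrableOn f (Icc a b) :=
  (by fun_prop : Continuous fun x : ℝ => m * x + q).integrableOn_Icc.congr_fun hf.symm
    measurableSet_Icc

theorem integral_Icc_of_eqOn_affine {f : ℝ → ℝ} {m q a b : ℝ} (hab : a ≤ b)
    (hf : EqOn f (fun x => m * x + q) (Icc a b)) :
    ∫ x in Icc a b, f x = m * (b ^ 2 - a ^ 2) / 2 + q * (b - a) := by
  rw [setIntegral_congr_fun measurableSet_Icc hf, integral_Icc_eq_integral_Ioc,
    ← intervalIntegral.integral_of_le hab, intervalIntegral.integral_add,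
    intervalIntegral.integral_const_mul, integral_id, intervalIntegral.integral_const, smul_eq_mul]
  · ring
  all_goals exact Continuous.intervalIntegrable (by fun_prop) _ _

theorem measurable_abs_sub_rpow (p : ℝ) : Measurable fun z : ℝ × ℝ => |z.1 - z.2| ^ p := by
  fun_prop

noncomputable def translationPlan (μ : Measure ℝ) (k : ℝ) : Measure (ℝ × ℝ) :=
  μ.map fun x => (x, x + k)

section TranslationPlan

variable (μ : Measure ℝ) (k : ℝ)

theorem measurable_prodMk_add_const : Measurable fun x : ℝ => (x, x + k) := by fun_prop

theorem translationPlan_map_fst : (translationPlan μ k).map Prod.fst = μ := by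
  rw [translationPlan, Measure.map_map measurable_fst (measurable_prodMk_add_const k)]
  exact Measure.map_id

theorem translationPlan_map_snd : (translationPlan μ k).map Prod.snd = μ.map (· + k) := by
  rw [translationPlan, Measure.map_map measurable_snd (measurable_prodMk_add_const k)]
  rfl

theorem integrable_translationPlan [IsFiniteMeasure μ] (p : ℝ) :
    Integrable (fun z : ℝ × ℝ => |z.1 - z.2| ^ p) (translationPlan μ k) := by
  rw [translationPlan, integrable_map_measure (measurable_abs_sub_rpow p).aestronglyMeasurable
    (measurable_prodMk_add_const k).aemeasurable]
  simp [Function.comp_def]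

theorem integral_translationPlan (p : ℝ) :
    ∫ z, |z.1 - z.2| ^ p ∂translationPlan μ k = μ.real univ * |k| ^ p := by
  rw [translationPlan, integral_map (measurable_prodMk_add_const k).aemeasurable
    (measurable_abs_sub_rpow p).aestronglyMeasurable]
  simp

end TranslationPlan

instance (c a b : ℝ) : IsFiniteMeasure (ENNReal.ofReal c • volume.restrict (Icc a b)) :=
  Measure.smul_finite _ ENNReal.ofReal_ne_top

theorem translationPlan_smul_restrict_Icc_map_snd (c a b k : ℝ) :
    (translationPlan (ENNReal.ofReal c • volume.restrict (Icc a b)) k).map Prod.snd =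
      ENNReal.ofReal c • volume.restrict (Icc (a + k) (b + k)) := by
  rw [translationPlan_map_snd, Measure.map_smul, map_restrict_Icc_add_const]

theorem integral_translationPlan_smul_restrict_Icc {c a b : ℝ} (hc : 0 ≤ c) (hab : a ≤ b)
    (k p : ℝ) :
    ∫ z, |z.1 - z.2| ^ p ∂translationPlan (ENNReal.ofReal c • volume.restrict (Icc a b)) k =
      c * (b - a) * |k| ^ p := by
  simp [integral_translationPlan, hc, hab]

theorem withDensity_rhoDens (θ : ℝ) :
    volume.withDensity (fun x => ENNReal.ofReal (rhoDens θ x)) =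
      stepMeasure (0.5 + θ) (Icc 0 1) (0.5 - θ) (Icc 2 3) :=
  withDensity_ofReal_add_indicator measurableSet_Icc measurableSet_Icc
    (disjoint_left.2 fun _ hx hx' => by linarith [hx.2, hx'.1])

theorem withDensity_rhoStarDens :
    volume.withDensity (fun y => ENNReal.ofReal (rhoStarDens y)) =
      stepMeasure 0.5 (Icc 1 2) 0.5 (Icc 3 4) :=
  withDensity_ofReal_add_indicator measurableSet_Icc measurableSet_Icc
    (disjoint_left.2 fun _ hx hx' => by linarith [hx.2, hx'.1])

theorem gcost_eq (p θ : ℝ) :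
    gcost p θ = Tc (fun z : ℝ × ℝ => |z.1 - z.2| ^ p)
      (stepMeasure (0.5 + θ) (Icc 0 1) (0.5 - θ) (Icc 2 3))
      (stepMeasure 0.5 (Icc 1 2) 0.5 (Icc 3 4)) := by
  rw [gcost, withDensity_rhoDens, withDensity_rhoStarDens]

theorem gcost_le_of_nonneg (p : ℝ) {θ : ℝ} (hθ₀ : 0 ≤ θ) (hθ₁ : θ ≤ 1 / 2) :
    gcost p θ ≤ 1 + (3 ^ p - 1) * θ := by
  set π := translationPlan (ENNReal.ofReal 0.5 • volume.restrict (Icc 0 1)) 1 +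
    translationPlan (ENNReal.ofReal θ • volume.restrict (Icc 0 1)) 3 +
    translationPlan (ENNReal.ofReal (0.5 - θ) • volume.restrict (Icc 2 3)) 1
  have hfst : π.map Prod.fst = stepMeasure (0.5 + θ) (Icc 0 1) (0.5 - θ) (Icc 2 3) := by
    simp only [π, Measure.map_add _ _ measurable_fst, translationPlan_map_fst, stepMeasure,
      ENNReal.ofReal_add (by norm_num : (0 : ℝ) ≤ 0.5) hθ₀, add_smul]
  have hsnd : π.map Prod.snd = stepMeasure 0.5 (Icc 1 2) 0.5 (Icc 3 4) := by
    simp only [π, Measure.map_add _ _ measurable_snd, translationPlan_smul_restrict_Icc_map_snd,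
      stepMeasure]
    norm_num
    rw [add_assoc, ← add_smul, ← ENNReal.ofReal_add hθ₀ (by linarith)]
    norm_num
  calc gcost p θ ≤ ∫ z, |z.1 - z.2| ^ p ∂π :=
        gcost_eq p θ ▸ Tc_le_integral (fun _ => by positivity) hfst hsnd
    _ = 1 + (3 ^ p - 1) * θ := by
      simp only [π]
      rw [integral_add_measure ((integrable_translationPlan _ _ p).add_measure
          (integrable_translationPlan _ _ p)) (integrable_translationPlan _ _ p),
        integral_add_measure (integrable_translationPlan _ _ p) (integrable_translationPlan _ _ p),
        integral_translationPlan_smul_restrict_Icc (by norm_num) zero_le_one,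
        integral_translationPlan_smul_restrict_Icc hθ₀ zero_le_one,
        integral_translationPlan_smul_restrict_Icc (by linarith) (by norm_num)]
      norm_num
      ring

theorem gcost_le_one_of_nonpos (p : ℝ) {θ : ℝ} (hθ₀ : -(1 / 2) ≤ θ) (hθ₁ : θ ≤ 0) :
    gcost p θ ≤ 1 := by
  set π := translationPlan (ENNReal.ofReal (0.5 + θ) • volume.restrict (Icc 0 1)) 1 +
    translationPlan (ENNReal.ofReal (-θ) • volume.restrict (Icc 2 3)) (-1) +
    translationPlan (ENNReal.ofReal 0.5 • volume.restrict (Icc 2 3)) 1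
  have hfst : π.map Prod.fst = stepMeasure (0.5 + θ) (Icc 0 1) (0.5 - θ) (Icc 2 3) := by
    simp only [π, Measure.map_add _ _ measurable_fst, translationPlan_map_fst, stepMeasure]
    rw [add_assoc, ← add_smul, ← ENNReal.ofReal_add (by linarith) (by norm_num)]
    ring_nf
  have hsnd : π.map Prod.snd = stepMeasure 0.5 (Icc 1 2) 0.5 (Icc 3 4) := by
    simp only [π, Measure.map_add _ _ measurable_snd, translationPlan_smul_restrict_Icc_map_snd,
      stepMeasure]
    norm_num
    rw [← add_smul, ← ENNReal.ofReal_add (by linarith) (by linarith)]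
    norm_num
  calc gcost p θ ≤ ∫ z, |z.1 - z.2| ^ p ∂π :=
        gcost_eq p θ ▸ Tc_le_integral (fun _ => by positivity) hfst hsnd
    _ = 1 := by
      simp only [π]
      rw [integral_add_measure ((integrable_translationPlan _ _ p).add_measure
          (integrable_translationPlan _ _ p)) (integrable_translationPlan _ _ p),
        integral_add_measure (integrable_translationPlan _ _ p) (integrable_translationPlan _ _ p),
        integral_translationPlan_smul_restrict_Icc (by linarith) zero_le_one,
        integral_translationPlan_smul_restrict_Icc (by linarith) (by norm_num),
        integral_translationPlan_smul_restrict_Icc (by norm_num) (by norm_num)]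
      norm_num

theorem one_add_mul_sub_one_le_rpow {p u : ℝ} (hp : 1 ≤ p) (hu : 0 ≤ u) :
    1 + p * (u - 1) ≤ u ^ p := by
  simpa using one_add_mul_self_le_rpow_one_add (s := u - 1) (by linarith) hp

theorem two_rpow_add_mul_sub_two_le_rpow {p u : ℝ} (hp : 1 ≤ p) (hu : 2 ≤ u) :
    2 ^ p + p * (u - 2) ≤ u ^ p := by
  have h2 : (2 : ℝ) ≤ 2 ^ p := by
    simpa using Real.rpow_le_rpow_of_exponent_le (by norm_num : (1 : ℝ) ≤ 2) hp
  have hhalf := one_add_mul_sub_one_le_rpow hp (by linarith : 0 ≤ u / 2)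
  calc 2 ^ p + p * (u - 2) ≤ 2 ^ p * (1 + p * (u / 2 - 1)) := by
        nlinarith [mul_nonneg (by linarith : (0 : ℝ) ≤ p) (by linarith : 0 ≤ u - 2)]
    _ ≤ 2 ^ p * (u / 2) ^ p := by gcongr
    _ = u ^ p := by rw [← Real.mul_rpow (by norm_num) (by linarith)]; ring_nf

/-- Kantorovich potentials for `ρ(·,θ)` and `ρ*`: slope `±p` matches the unit translation, and
`δ` is the jump between the two components, which the constraints `[0,1] → [3,4]` and
`[2,3] → [1,2]` confine to `[1 - p, 2 ^ p - p - 1]`. -/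
noncomputable def sourcePotential (p δ x : ℝ) : ℝ := -p * x + if x ≤ 1 then δ else 0

noncomputable def targetPotential (p δ y : ℝ) : ℝ := p * y + 1 - p - if y ≤ 2 then δ else 0

section Potentials

variable {p δ : ℝ}

theorem sourcePotential_add_targetPotential_le (hp : 1 ≤ p) (hδ₁ : 1 - p ≤ δ)
    (hδ₂ : δ ≤ 2 ^ p - p - 1) {x y : ℝ} (hx : x ∈ Icc 0 1 ∪ Icc 2 3)
    (hy : y ∈ Icc 1 2 ∪ Icc 3 4) :
    sourcePotential p δ x + targetPotential p δ y ≤ |x - y| ^ p := by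
  rcases hx with ⟨hx₀, hx₁⟩ | ⟨hx₂, hx₃⟩ <;> rcases hy with ⟨hy₁, hy₂⟩ | ⟨hy₃, hy₄⟩
  · have := one_add_mul_sub_one_le_rpow hp (by linarith : 0 ≤ y - x)
    rw [abs_sub_comm, abs_of_nonneg (by linarith)]
    simp only [sourcePotential, targetPotential, if_pos hx₁, if_pos hy₂]
    linarith
  · have := two_rpow_add_mul_sub_two_le_rpow hp (by linarith : 2 ≤ y - x)
    rw [abs_sub_comm, abs_of_nonneg (by linarith)]
    simp only [sourcePotential, targetPotential, if_pos hx₁, if_neg (by linarith : ¬y ≤ 2)]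
    linarith
  · have := Real.rpow_nonneg (abs_nonneg (x - y)) p
    simp only [sourcePotential, targetPotential, if_neg (by linarith : ¬x ≤ 1), if_pos hy₂]
    nlinarith
  · have := one_add_mul_sub_one_le_rpow hp (by linarith : 0 ≤ y - x)
    rw [abs_sub_comm, abs_of_nonneg (by linarith)]
    simp only [sourcePotential, targetPotential, if_neg (by linarith : ¬x ≤ 1),
      if_neg (by linarith : ¬y ≤ 2)]
    linarith

theorem sourcePotential_eqOn_Icc_zero_one :
    EqOn (sourcePotential p δ) (fun x => -p * x + δ) (Icc 0 1) := fun x hx => by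
  simp [sourcePotential, hx.2]

theorem sourcePotential_eqOn_Icc_two_three :
    EqOn (sourcePotential p δ) (fun x => -p * x + 0) (Icc 2 3) := fun x hx => by
  simp [sourcePotential, show ¬x ≤ 1 by linarith [hx.1]]

theorem targetPotential_eqOn_Icc_one_two :
    EqOn (targetPotential p δ) (fun y => p * y + (1 - p - δ)) (Icc 1 2) := fun y hy => by
  simp [targetPotential, hy.2]; ring

theorem targetPotential_eqOn_Icc_three_four :
    EqOn (targetPotential p δ) (fun y => p * y + (1 - p)) (Icc 3 4) := fun y hy => by
  simp [targetPotential, show ¬y ≤ 2 by linarith [hy.1]]; ring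

theorem integrable_sourcePotential (c d : ℝ) :
    Integrable (sourcePotential p δ) (stepMeasure c (Icc 0 1) d (Icc 2 3)) :=
  integrable_stepMeasure (integrableOn_Icc_of_eqOn_affine sourcePotential_eqOn_Icc_zero_one)
    (integrableOn_Icc_of_eqOn_affine sourcePotential_eqOn_Icc_two_three)

theorem integrable_targetPotential (c d : ℝ) :
    Integrable (targetPotential p δ) (stepMeasure c (Icc 1 2) d (Icc 3 4)) :=
  integrable_stepMeasure (integrableOn_Icc_of_eqOn_affine targetPotential_eqOn_Icc_one_two)
    (integrableOn_Icc_of_eqOn_affine targetPotential_eqOn_Icc_three_four)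

theorem integral_sourcePotential {θ : ℝ} (hθ : |θ| ≤ 1 / 2) :
    ∫ x, sourcePotential p δ x ∂stepMeasure (0.5 + θ) (Icc 0 1) (0.5 - θ) (Icc 2 3) =
      1 / 2 * δ - 3 / 2 * p + (2 * p + δ) * θ := by
  obtain ⟨hθ₁, hθ₂⟩ := abs_le.1 hθ
  rw [integral_stepMeasure (by linarith) (by linarith)
      (integrableOn_Icc_of_eqOn_affine sourcePotential_eqOn_Icc_zero_one)
      (integrableOn_Icc_of_eqOn_affine sourcePotential_eqOn_Icc_two_three),
    integral_Icc_of_eqOn_affine zero_le_one sourcePotential_eqOn_Icc_zero_one,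
    integral_Icc_of_eqOn_affine (by norm_num) sourcePotential_eqOn_Icc_two_three]
  ring

theorem integral_targetPotential :
    ∫ y, targetPotential p δ y ∂stepMeasure 0.5 (Icc 1 2) 0.5 (Icc 3 4) =
      1 - 1 / 2 * δ + 3 / 2 * p := by
  rw [integral_stepMeasure (by norm_num) (by norm_num)
      (integrableOn_Icc_of_eqOn_affine targetPotential_eqOn_Icc_one_two)
      (integrableOn_Icc_of_eqOn_affine targetPotential_eqOn_Icc_three_four),
    integral_Icc_of_eqOn_affine (by norm_num) targetPotential_eqOn_Icc_one_two,
    integral_Icc_of_eqOn_affine (by norm_num) targetPotential_eqOn_Icc_three_four]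
  ring

end Potentials

theorem one_add_mul_le_gcost {p δ θ : ℝ} (hp : 1 ≤ p) (hδ₁ : 1 - p ≤ δ)
    (hδ₂ : δ ≤ 2 ^ p - p - 1) (hθ : |θ| ≤ 1 / 2) : 1 + (2 * p + δ) * θ ≤ gcost p θ := by
  obtain ⟨hθ₁, hθ₂⟩ := abs_le.1 hθ
  have : IsProbabilityMeasure (stepMeasure (0.5 + θ) (Icc 0 1) (0.5 - θ) (Icc 2 3)) :=
    isProbabilityMeasure_stepMeasure (by linarith) (by linarith) (by ring) (by norm_num)
      (by norm_num)
  have : IsProbabilityMeasure (stepMeasure 0.5 (Icc 1 2) 0.5 (Icc 3 4)) :=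
    isProbabilityMeasure_stepMeasure (by norm_num) (by norm_num) (by norm_num) (by norm_num)
      (by norm_num)
  have hbound : ∀ x ∈ Icc (0 : ℝ) 1 ∪ Icc 2 3, ∀ y ∈ Icc (1 : ℝ) 2 ∪ Icc 3 4,
      |(fun z : ℝ × ℝ => |z.1 - z.2| ^ p) (x, y)| ≤ 4 ^ p := by
    rintro x hx y hy
    rw [abs_of_nonneg (by positivity)]
    refine Real.rpow_le_rpow (abs_nonneg _) (abs_le.2 ⟨?_, ?_⟩) (by linarith) <;>
      rcases hx with hx | hx <;> rcases hy with hy | hy <;> linarith [hx.1, hx.2, hy.1, hy.2]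
  calc 1 + (2 * p + δ) * θ = ∫ x, sourcePotential p δ x
        ∂stepMeasure (0.5 + θ) (Icc 0 1) (0.5 - θ) (Icc 2 3) +
          ∫ y, targetPotential p δ y ∂stepMeasure 0.5 (Icc 1 2) 0.5 (Icc 3 4) := by
        rw [integral_sourcePotential hθ, integral_targetPotential]; ring
    _ ≤ gcost p θ := gcost_eq p θ ▸ integral_add_integral_le_Tc (measurable_abs_sub_rpow p)
        (ae_mem_union_stepMeasure measurableSet_Icc measurableSet_Icc)
        (ae_mem_union_stepMeasure measurableSet_Icc measurableSet_Icc) hbound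
        (integrable_sourcePotential _ _) (integrable_targetPotential _ _)
        fun x hx y hy => sourcePotential_add_targetPotential_le hp hδ₁ hδ₂ hx hy

/-- For `p > 1`, the function `g(θ) = W_p^p(ρ(·,θ), ρ*)` is not
differentiable at `θ = 0`: the right lower derivative is at least `2^p + p − 1`
while the left upper derivative is at most `p + 1`, and `2^p + p − 1 > p + 1`. -/
theorem stmt17 (p : ℝ) (hp : 1 < p) :
    (2 : ℝ) ^ p + p - 1 ≤
        liminf (fun θ : ℝ => (gcost p θ - gcost p 0) / θ) (nhdsWithin 0 (Ioi 0)) ∧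
    limsup (fun θ : ℝ => (gcost p θ - gcost p 0) / θ) (nhdsWithin 0 (Iio 0)) ≤ p + 1 ∧
    p + 1 < (2 : ℝ) ^ p + p - 1 ∧
    ¬DifferentiableAt ℝ (gcost p) 0 := by
  have h2p : (2 : ℝ) < 2 ^ p := by simpa using Real.rpow_lt_rpow_of_exponent_lt one_lt_two hp
  have hδ : 1 - p ≤ 2 ^ p - p - 1 := by linarith
  have hg₀ : gcost p 0 = 1 :=
    (gcost_le_one_of_nonpos p (by norm_num) le_rfl).antisymm
      (by simpa using one_add_mul_le_gcost (θ := 0) hp.le le_rfl hδ (by norm_num))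
  have hright : ∀ᶠ θ in 𝓝[>] (0 : ℝ), θ ∈ Ioo 0 (1 / 2) := Ioo_mem_nhdsGT (by norm_num)
  have hleft : ∀ᶠ θ in 𝓝[<] (0 : ℝ), θ ∈ Ioo (-(1 / 2)) 0 := Ioo_mem_nhdsLT (by norm_num)
  have hliminf : 2 ^ p + p - 1 ≤ liminf (fun θ => (gcost p θ - gcost p 0) / θ) (𝓝[>] 0) :=
    le_liminf_slope_right (b := 3 ^ p - 1)
      (hright.mono fun θ hθ => by
        have := one_add_mul_le_gcost hp.le hδ le_rfl (abs_le.2 ⟨by linarith [hθ.1], hθ.2.le⟩)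
        linarith)
      (hright.mono fun θ hθ => hg₀ ▸ gcost_le_of_nonneg p hθ.1.le hθ.2.le)
  have hlimsup : limsup (fun θ => (gcost p θ - gcost p 0) / θ) (𝓝[<] 0) ≤ p + 1 :=
    limsup_slope_left_le (b := 0)
      (hleft.mono fun θ hθ => by
        have := one_add_mul_le_gcost hp.le le_rfl hδ (abs_le.2 ⟨hθ.1.le, by linarith [hθ.2]⟩)
        linarith)
      (hleft.mono fun θ hθ => by simpa [hg₀] using gcost_le_one_of_nonpos p hθ.1.le hθ.2.le)
  refine ⟨hliminf, hlimsup, by linarith, fun hdiff => ?_⟩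
  have := hdiff.limsup_slope_left_eq_liminf_slope_right
  linarith
end
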